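/- arXiv:1506.02391 — 6 statements merged into one kernel-verified Lean document; each statement's English description precedes it below -/
import Mathlib

section
/- Assume (i) for every ε > 0 there exists M > 0 such that f i t ≤ (λ + ε)·t for all i ∈ ι and all t ≥ M (i.e. limsup_{t→+∞} f(i,t)/t ≤ λ uniformly in i), and (ii) for every K > 0 there exists δ > 0 such that f i t · t − 2·F i t > K for all i ∈ ι and all t ≥ δ (i.e. lim_{t→+∞}[f(i,t)·t − 2F(i,t)] = +∞ uniformly in i). Then for every K > 0 there exists δ > 0 such that λ·t² − 2·F i t ≥ K for all i ∈ ι and all t ≥ δ; that is, lim_{t→+∞}[λt² − 2F(i,t)] = +∞ uniformly in i. -/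
/-!
The derivative of `(F t + K / 2) / t²` is `(f t · t − 2 F t − K) / t³`, so by (ii) this quotient
is nondecreasing on `[δ, ∞)`. By (i), `F t ≤ (λ + ε) t² / 2 + O(1)`, so its `limsup` at `+∞` is at
most `λ / 2`; being nondecreasing, it is then `≤ λ / 2` on all of `[δ, ∞)`, which is the claim.
The argument runs for each `i` separately, and uniformity in `i` comes from the `δ` of (ii) alone.
-/

open Set Filter Topology

lemma MonotoneOn.le_of_eventually_le_add {g : ℝ → ℝ} {a L : ℝ} (hg : MonotoneOn g (Ici a))
    (hL : ∀ ε > 0, ∀ᶠ s in atTop, g s ≤ L + ε) {t : ℝ} (ht : a ≤ t) : g t ≤ L := by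
  refine le_of_forall_pos_le_add fun ε hε => ?_
  obtain ⟨s, hs, hts⟩ := ((hL ε hε).and (eventually_ge_atTop t)).exists
  exact (hg ht (ht.trans hts) hts).trans hs

lemma monotoneOn_Ici_of_hasDerivAt_nonneg {g g' : ℝ → ℝ} {a : ℝ}
    (hg : ∀ x ≥ a, HasDerivAt g (g' x) x) (hg' : ∀ x > a, 0 ≤ g' x) : MonotoneOn g (Ici a) :=
  monotoneOn_of_hasDerivWithinAt_nonneg (convex_Ici a)
    (fun x hx => (hg x hx).continuousAt.continuousWithinAt)
    (fun x hx => (hg x (interior_subset hx)).hasDerivWithinAt)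
    fun x hx => hg' x (by rwa [interior_Ici] at hx)

variable {F f : ℝ → ℝ}

lemma le_add_of_hasDerivAt_of_le_mul (hF : ∀ x, HasDerivAt F (f x) x) {a M : ℝ}
    (hf : ∀ t ≥ M, f t ≤ a * t) {s : ℝ} (hs : M ≤ s) :
    F s ≤ F M + a / 2 * (s ^ 2 - M ^ 2) := by
  have hG : ∀ x, HasDerivAt (fun y => a / 2 * y ^ 2 - F y) (a * x - f x) x := fun x => by
    have h : HasDerivAt (fun y => a / 2 * y ^ 2 - F y) _ x :=
      ((hasDerivAt_pow 2 x).const_mul (a / 2)).sub (hF x)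
    convert h using 1
    ring
  have hmono := monotoneOn_Ici_of_hasDerivAt_nonneg (fun x _ => hG x)
    fun x hx => sub_nonneg.2 (hf x (le_of_lt hx))
  have := hmono self_mem_Ici hs hs
  simp only at this
  linarith

lemma eventually_div_sq_le_add (hF : ∀ x, HasDerivAt F (f x) x) {lam : ℝ}
    (hf : ∀ ε > 0, ∃ M, ∀ t ≥ M, f t ≤ (lam + ε) * t) (c : ℝ) :
    ∀ ε > 0, ∀ᶠ s in atTop, (F s + c) / s ^ 2 ≤ lam / 2 + ε := by
  intro ε hε
  obtain ⟨M, hM⟩ := hf ε hε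
  set C := F M + c - (lam + ε) / 2 * M ^ 2 with hC_def
  have hC : Tendsto (fun s : ℝ => C / s ^ 2) atTop (𝓝 0) :=
    (tendsto_pow_atTop two_ne_zero).const_div_atTop C
  filter_upwards [hC.eventually (ge_mem_nhds (half_pos hε)), eventually_ge_atTop M,
    eventually_gt_atTop 0] with s hCs hMs hs
  have hFs := le_add_of_hasDerivAt_of_le_mul hF hM hMs
  calc (F s + c) / s ^ 2 ≤ ((lam + ε) / 2 * s ^ 2 + C) / s ^ 2 :=
        div_le_div_of_nonneg_right (by linarith [hC_def]) (sq_nonneg s)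
    _ = (lam + ε) / 2 + C / s ^ 2 := by field_simp
    _ ≤ lam / 2 + ε := by linarith

lemma monotoneOn_add_const_div_sq (hF : ∀ x, HasDerivAt F (f x) x) {c δ : ℝ} (hδ : 0 < δ)
    (h : ∀ s ≥ δ, 2 * (F s + c) ≤ f s * s) :
    MonotoneOn (fun s => (F s + c) / s ^ 2) (Ici δ) := by
  refine monotoneOn_Ici_of_hasDerivAt_nonneg
    (g' := fun s => (f s * s - 2 * (F s + c)) / s ^ 3) (fun s hs => ?_) fun s hs => ?_
  · have hs0 : 0 < s := hδ.trans_le hs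
    have h : HasDerivAt (fun y => (F y + c) / y ^ 2) _ s :=
      ((hF s).add_const c).div (hasDerivAt_pow 2 s) (by positivity)
    convert h using 1
    field_simp
    ring
  · have hs0 : 0 < s := hδ.trans hs
    exact div_nonneg (sub_nonneg.2 (h s hs.le)) (by positivity)

theorem le_mul_sq_sub_two_mul_of_hasDerivAt (hF : ∀ x, HasDerivAt F (f x) x) {lam K δ : ℝ}
    (hδ : 0 < δ) (hf : ∀ ε > 0, ∃ M, ∀ t ≥ M, f t ≤ (lam + ε) * t)
    (hK : ∀ t ≥ δ, K < f t * t - 2 * F t) {t : ℝ} (ht : δ ≤ t) :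
    K ≤ lam * t ^ 2 - 2 * F t := by
  have hmono := monotoneOn_add_const_div_sq hF (c := K / 2) hδ fun s hs => by
    linarith [hK s hs]
  have hle := hmono.le_of_eventually_le_add (eventually_div_sq_le_add hF hf (K / 2)) ht
  have ht2 : 0 < t ^ 2 := by have := hδ.trans_le ht; positivity
  rw [div_le_iff₀ ht2] at hle
  linarith

theorem stmt_0_general {ι : Type*} (lam : ℝ) (f : ι → ℝ → ℝ)
    (hf_cont : ∀ i, Continuous (f i))
    (F : ι → ℝ → ℝ)
    (hF : ∀ i ξ, F i ξ = ∫ t in (0:ℝ)..ξ, f i t)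
    (h1 : ∀ ε > 0, ∃ M > 0, ∀ i, ∀ t ≥ M, f i t ≤ (lam + ε) * t)
    (h2 : ∀ K > 0, ∃ δ > 0, ∀ i, ∀ t ≥ δ, f i t * t - 2 * F i t > K) :
    ∀ K > 0, ∃ δ > 0, ∀ i, ∀ t ≥ δ, lam * t ^ 2 - 2 * F i t ≥ K := by
  intro K hK
  obtain ⟨δ, hδ, hδK⟩ := h2 K hK
  refine ⟨δ, hδ, fun i t ht => ?_⟩
  have hFi : ∀ x, HasDerivAt (F i) (f i x) x := fun x => by
    rw [funext (hF i)]
    exact ((hf_cont i).integral_hasStrictDerivAt 0 x).hasDerivAt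
  have hfi : ∀ ε > 0, ∃ M, ∀ t ≥ M, f i t ≤ (lam + ε) * t := fun ε hε => by
    obtain ⟨M, -, hM⟩ := h1 ε hε
    exact ⟨M, hM i⟩
  exact le_mul_sq_sub_two_mul_of_hasDerivAt hFi hδ hfi (hδK i) ht

/-- Lemma 3 (auxone), uniform version: if `limsup_{t→+∞} f(i,t)/t ≤ λ` uniformly in `i`
and `f(i,t)·t − 2F(i,t) → +∞` uniformly in `i`, then `λt² − 2F(i,t) → +∞` uniformly in `i`. -/
theorem stmt_0 {ι : Type*} [Nonempty ι] (lam : ℝ) (f : ι → ℝ → ℝ)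
    (hf_cont : ∀ i, Continuous (f i))
    (A : ℝ) (hA : 0 < A)
    (hgrowth : ∀ i t, |f i t| ≤ A * (1 + |t|))
    (F : ι → ℝ → ℝ)
    (hF : ∀ i ξ, F i ξ = ∫ t in (0:ℝ)..ξ, f i t)
    (h1 : ∀ ε > 0, ∃ M > 0, ∀ i, ∀ t ≥ M, f i t ≤ (lam + ε) * t)
    (h2 : ∀ K > 0, ∃ δ > 0, ∀ i, ∀ t ≥ δ, f i t * t - 2 * F i t > K) :
    ∀ K > 0, ∃ δ > 0, ∀ i, ∀ t ≥ δ, lam * t ^ 2 - 2 * F i t ≥ K :=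
  stmt_0_general lam f hf_cont F hF h1 h2
end

section
/- If K > 0 and δ > 0 are such that f(t)·t − 2F(t) > K for all t ≥ δ, then for all ξ, t with ξ ≥ t ≥ δ one has F(ξ)/ξ² − F(t)/t² ≥ −(K/2)·(1/ξ² − 1/t²). -/
/-- The differential inequality step in the proof of Lemma 3: if `f(t)·t − 2F(t) > K`
for all `t ≥ δ`, then `F(ξ)/ξ² − F(t)/t² ≥ −(K/2)(1/ξ² − 1/t²)` for `ξ ≥ t ≥ δ`. -/
theorem stmt_2 (f : ℝ → ℝ) (hf : Continuous f) (F : ℝ → ℝ)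
    (hF : ∀ t, F t = ∫ s in (0:ℝ)..t, f s)
    (K δ : ℝ) (hK : 0 < K) (hδ : 0 < δ)
    (h : ∀ t ≥ δ, f t * t - 2 * F t > K) :
    ∀ ξ t : ℝ, ξ ≥ t → t ≥ δ →
      F ξ / ξ ^ 2 - F t / t ^ 2 ≥ -(K / 2) * (1 / ξ ^ 2 - 1 / t ^ 2) := by
  -- F has derivative f everywhere
  have hFd : ∀ x : ℝ, HasDerivAt F (f x) x := by
    intro x
    have := (intervalIntegral.integral_hasDerivAt_right
      (hf.intervalIntegrable 0 x) (hf.stronglyMeasurableAtFilter _ _)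
      hf.continuousAt)
    have heq : (fun t : ℝ => ∫ s in (0:ℝ)..t, f s) = F := by
      funext t; rw [hF t]
    rwa [heq] at this
  set G : ℝ → ℝ := fun x => F x / x ^ 2 + (K / 2) / x ^ 2 with hG
  have hGd : ∀ x : ℝ, x ≠ 0 → HasDerivAt G
      ((f x * x ^ 2 - F x * (2 * x)) / (x ^ 2) ^ 2 + -(K / 2 * (2 * x)) / (x ^ 2) ^ 2) x := by
    intro x hx
    have hx2 : (x : ℝ) ^ 2 ≠ 0 := pow_ne_zero _ hx
    have h1 : HasDerivAt (fun x : ℝ => x ^ 2) (2 * x) x := by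
      simpa [mul_comm] using (hasDerivAt_pow 2 x)
    exact ((hFd x).div h1 hx2).add ((hasDerivAt_const x (K / 2)).div h1 hx2 |>.congr_deriv
      (by ring))
  -- G is monotone on [δ, ∞)
  have hmono : MonotoneOn G (Set.Ici δ) := by
    have hcont : ContinuousOn G (Set.Ici δ) := by
      intro x hx
      have hx0 : x ≠ 0 := (hδ.trans_le hx).ne'
      exact ((hGd x hx0).continuousAt).continuousWithinAt
    apply monotoneOn_of_deriv_nonneg (convex_Ici δ) hcont
    · intro x hx
      rw [interior_Ici] at hx
      have hx0 : (0:ℝ) < x := hδ.trans hx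
      exact ((hGd x hx0.ne').differentiableAt).differentiableWithinAt
    intro x hx
    rw [interior_Ici] at hx
    have hx0 : (0:ℝ) < x := hδ.trans hx
    have hd := hGd x hx0.ne'
    rw [hd.deriv]
    have hfx := h x hx.le
    have hx3 : (0:ℝ) < x ^ 3 := by positivity
    have key : (f x * x ^ 2 - F x * (2 * x)) / (x ^ 2) ^ 2 + -(K / 2 * (2 * x)) / (x ^ 2) ^ 2
        = (f x * x - 2 * F x - K) / x ^ 3 := by
      field_simp
      ring
    rw [key]
    exact div_nonneg (by linarith) hx3.le
  intro ξ t hξt htδ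
  have hle : G t ≤ G ξ := hmono htδ (le_trans htδ hξt) hξt
  have htp : (0:ℝ) < t := hδ.trans_le htδ
  have ht0 : (0:ℝ) < t ^ 2 := by positivity
  have hξp : (0:ℝ) < ξ := lt_of_lt_of_le hδ (le_trans htδ hξt)
  have hξ0 : (0:ℝ) < ξ ^ 2 := by positivity
  simp only [hG] at hle
  have : F ξ / ξ ^ 2 - F t / t ^ 2 ≥ (K/2) / t ^ 2 - (K/2) / ξ ^ 2 := by linarith
  calc F ξ / ξ ^ 2 - F t / t ^ 2 ≥ (K/2) / t ^ 2 - (K/2) / ξ ^ 2 := this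
    _ = -(K / 2) * (1 / ξ ^ 2 - 1 / t ^ 2) := by ring
end

section
/- For every r > 2 there exists a constant c₄ > 0 such that q·F(t) − f(t)·t ≥ −c₄·|t|^r for all t ∈ ℝ. -/
/-- Second inequality of (3.29): under (f₁) and (f₇), for every `r > 2` there is `c₄ > 0`
with `qF(t) − f(t)t ≥ −c₄|t|^r` on all of `ℝ`. -/
theorem stmt_5 (f : ℝ → ℝ) (hf : Continuous f) (F : ℝ → ℝ)
    (hF : ∀ t, F t = ∫ s in (0:ℝ)..t, f s)
    (A : ℝ) (hA : 0 < A) (hgrowth : ∀ t, |f t| ≤ A * (1 + |t|))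
    (a₄ q δ : ℝ) (ha₄ : 0 < a₄) (hq0 : 0 < q) (hq2 : q < 2) (hδ : 0 < δ)
    (hloc : ∀ t : ℝ, |t| ≤ δ → a₄ * |t| ^ q ≤ f t * t ∧ f t * t ≤ q * F t) :
    ∀ r > (2:ℝ), ∃ c₄ > 0, ∀ t : ℝ, q * F t - f t * t ≥ -c₄ * |t| ^ r := by
  intro r hr
  refine ⟨(q + 1) * A * (1 + 1/δ) * δ ^ (2 - r), by positivity, ?_⟩
  intro t
  rcases le_or_gt |t| δ with h | h
  · have h1 := (hloc t h).2
    have h2 : (0:ℝ) ≤ ((q + 1) * A * (1 + 1/δ) * δ ^ (2 - r)) * |t| ^ r := by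
      positivity
    nlinarith
  · -- |t| > δ
    have ht0 : (0:ℝ) < |t| := lt_trans hδ h
    -- bound on F
    have hFb : |F t| ≤ A * (1 + |t|) * |t| := by
      rw [hF t]
      have := intervalIntegral.norm_integral_le_of_norm_le_const
        (C := A * (1 + |t|)) (f := f) (a := (0:ℝ)) (b := t) ?_
      · simpa using this
      · intro x hx
        have hxle : |x| ≤ |t| := by
          rcases le_total (0:ℝ) t with h' | h'
          · rw [Set.uIoc_of_le h'] at hx
            rw [abs_of_pos hx.1, abs_of_nonneg h']; exact hx.2
          · rw [Set.uIoc_of_ge h'] at hx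
            rw [abs_of_nonpos (le_trans hx.2 (le_refl 0)), abs_of_nonpos h']
            linarith [hx.1]
        calc ‖f x‖ ≤ A * (1 + |x|) := hgrowth x
          _ ≤ A * (1 + |t|) := by nlinarith
    have hfb : |f t * t| ≤ A * (1 + |t|) * |t| := by
      rw [abs_mul]
      exact mul_le_mul_of_nonneg_right (hgrowth t) (abs_nonneg t)
    -- key: |t|^2 ≤ δ^(2-r) * |t|^r
    have hpow : |t| ^ (2:ℝ) ≤ δ ^ (2 - r) * |t| ^ r := by
      have h1 : δ ^ (r - 2) ≤ |t| ^ (r - 2) :=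
        Real.rpow_le_rpow hδ.le h.le (by linarith)
      have h2 : |t| ^ r = |t| ^ (2:ℝ) * |t| ^ (r - 2) := by
        rw [← Real.rpow_add ht0]; ring_nf
      have h3 : δ ^ (2 - r) * δ ^ (r - 2) = 1 := by
        rw [← Real.rpow_add hδ]; norm_num
      have h4 : δ ^ (2-r) * |t| ^ r = (δ ^ (2-r) * |t| ^ (r-2)) * |t| ^ (2:ℝ) := by
        rw [h2]; ring
      rw [h4]
      have h5 : (1:ℝ) ≤ δ ^ (2-r) * |t| ^ (r-2) := by
        calc (1:ℝ) = δ ^ (2-r) * δ ^ (r-2) := h3.symm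
          _ ≤ δ ^ (2-r) * |t| ^ (r-2) :=
            mul_le_mul_of_nonneg_left h1 (Real.rpow_nonneg hδ.le _)
      exact le_mul_of_one_le_left (Real.rpow_nonneg (abs_nonneg t) _) h5
    have hsq : |t| ^ (2:ℝ) = |t| * |t| := by
      rw [show (2:ℝ) = ((2:ℕ):ℝ) by norm_num, Real.rpow_natCast]; ring
    -- combine
    have hbound : A * (1 + |t|) * |t| ≤ A * (1 + 1/δ) * (|t| * |t|) := by
      have : 1 + |t| ≤ (1 + 1/δ) * |t| := by
        rw [add_mul, one_mul]
        have : 1 ≤ |t| / δ := (one_le_div hδ).mpr h.le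
        have : (1:ℝ) ≤ 1/δ * |t| := by rw [div_mul_eq_mul_div, one_mul]; linarith [this]
        linarith
      have h6 := mul_le_mul_of_nonneg_left (mul_le_mul_of_nonneg_right this (abs_nonneg t)) hA.le
      nlinarith [h6]
    have hmain : |q * F t - f t * t| ≤ (q + 1) * A * (1 + 1/δ) * (|t| * |t|) := by
      calc |q * F t - f t * t| ≤ |q * F t| + |f t * t| := abs_sub _ _
        _ = q * |F t| + |f t * t| := by rw [abs_mul, abs_of_pos hq0]
        _ ≤ q * (A * (1 + |t|) * |t|) + A * (1 + |t|) * |t| := by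
            have := mul_le_mul_of_nonneg_left hFb hq0.le
            linarith
        _ = (q + 1) * (A * (1 + |t|) * |t|) := by ring
        _ ≤ (q + 1) * (A * (1 + 1/δ) * (|t| * |t|)) := by
            exact mul_le_mul_of_nonneg_left hbound (by linarith)
        _ = (q + 1) * A * (1 + 1/δ) * (|t| * |t|) := by ring
    have hfinal : (q + 1) * A * (1 + 1/δ) * (|t| * |t|) ≤
        ((q + 1) * A * (1 + 1/δ) * δ ^ (2 - r)) * |t| ^ r := by
      have hc : (0:ℝ) ≤ (q + 1) * A * (1 + 1/δ) := by positivity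
      calc (q + 1) * A * (1 + 1/δ) * (|t| * |t|)
          = (q + 1) * A * (1 + 1/δ) * |t| ^ (2:ℝ) := by rw [hsq]
        _ ≤ (q + 1) * A * (1 + 1/δ) * (δ ^ (2-r) * |t| ^ r) :=
            mul_le_mul_of_nonneg_left hpow hc
        _ = ((q + 1) * A * (1 + 1/δ) * δ ^ (2 - r)) * |t| ^ r := by ring
    have := neg_abs_le (q * F t - f t * t)
    have h2 := hmain.trans hfinal
    linarith
end

section
/- For every u ∈ X with 0 < ‖u‖ ≤ 2ρ and ψ(u) ≥ 0, there exists a unique τ̄ = τ̄(u) ∈ (0,1] such that ψ(τ̄·u) = 0; moreover ψ(τ·u) < 0 for all τ ∈ (0, τ̄) and ψ(τ·u) > 0 for all τ ∈ (τ̄, 2ρ/‖u‖]. -/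
open Set

/-!
Along the ray, `g τ = ψ (τ • u)` satisfies `τ * g' τ = ψ'(τ u)(τ u)`, so by (H1) `g` has positive
derivative at each of its zeros in `(0, 2ρ/‖u‖]`. Such a function crosses zero only upwards: the
fencing theorem keeps it nonnegative after a zero, and one-sided Fermat forbids a later zero.
By (H2) `g` is negative near `0⁺` while `g 1 = ψ u ≥ 0`, so the intermediate value theorem gives a
zero in `(0, 1]`, and the crossing property gives the sign pattern and its uniqueness.
-/

theorem HasDerivAt.exists_lt_left {g : ℝ → ℝ} {g' a x : ℝ} (hg : HasDerivAt g g' x)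
    (hg' : 0 < g') (hax : a < x) : ∃ y ∈ Ico a x, g y < g x := by
  by_contra! hge
  have hmin : IsMinOn g (Icc a x) x := fun y hy => show g x ≤ g y from
    hy.2.eq_or_lt.elim (fun h => h ▸ le_rfl) fun h => hge y ⟨hy.1, h⟩
  have hcone : a - x ∈ posTangentConeAt (Icc a x) x :=
    sub_mem_posTangentConeAt_of_segment_subset (by rw [segment_symm, segment_eq_Icc hax.le])
  have := hmin.localize.hasFDerivWithinAt_nonneg hg.hasDerivWithinAt.hasFDerivWithinAt hcone
  simp only [ContinuousLinearMap.toSpanSingleton_apply, smul_eq_mul] at this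
  nlinarith

theorem pos_of_deriv_pos_at_zeros {g g' : ℝ → ℝ} {a b : ℝ}
    (hg : ∀ x ∈ Icc a b, HasDerivAt g (g' x) x) (hzero : ∀ x ∈ Icc a b, g x = 0 → 0 < g' x)
    (ha : 0 ≤ g a) : ∀ x ∈ Ioc a b, 0 < g x := by
  have hnonneg : ∀ x ∈ Icc a b, 0 ≤ g x := by
    have := image_le_of_deriv_right_lt_deriv_boundary (f := fun x => -g x) (f' := fun x => -g' x)
      (B := fun _ => 0) (B' := fun _ => 0)
      (fun x hx => (hg x hx).continuousAt.continuousWithinAt.neg)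
      (fun x hx => (hg x (Ico_subset_Icc_self hx)).hasDerivWithinAt.neg) (by simpa using ha)
      (fun _ => hasDerivAt_const _ _)
      (fun x hx hx0 => by simpa using hzero x (Ico_subset_Icc_self hx) (by simpa using hx0))
    exact fun x hx => by simpa using this hx
  intro x hx
  refine (hnonneg x (Ioc_subset_Icc_self hx)).lt_of_ne' fun hx0 => ?_
  obtain ⟨y, hy, hyx⟩ :=
    (hg x (Ioc_subset_Icc_self hx)).exists_lt_left (hzero x (Ioc_subset_Icc_self hx) hx0) hx.1
  exact (hnonneg y ⟨hy.1, hy.2.le.trans hx.2⟩).not_gt (hx0 ▸ hyx)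

theorem sign_of_deriv_pos_at_zeros {g g' : ℝ → ℝ} {a b c : ℝ}
    (hg : ∀ x ∈ Ioc a b, HasDerivAt g (g' x) x) (hzero : ∀ x ∈ Ioc a b, g x = 0 → 0 < g' x)
    (hc : c ∈ Ioc a b) (hgc : g c = 0) :
    (∀ x ∈ Ioo a c, g x < 0) ∧ ∀ x ∈ Ioc c b, 0 < g x := by
  have hsub {x : ℝ} (hx : a < x) : Icc x b ⊆ Ioc a b := Icc_subset_Ioc hx le_rfl
  refine ⟨fun x hx => not_le.mp fun hgx => ?_, ?_⟩
  · have := pos_of_deriv_pos_at_zeros (fun y hy => hg y (hsub hx.1 hy))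
      (fun y hy => hzero y (hsub hx.1 hy)) hgx c ⟨hx.2, hc.2⟩
    exact this.ne' hgc
  · exact pos_of_deriv_pos_at_zeros (fun y hy => hg y (hsub hc.1 hy))
      (fun y hy => hzero y (hsub hc.1 hy)) hgc.ge

theorem stmt_7_general {X : Type*} [NormedAddCommGroup X] [NormedSpace ℝ X]
    (ρ : ℝ) (ψ : X → ℝ) (hψ : ContDiff ℝ 1 ψ)
    (H1 : ∀ v : X, 0 < ‖v‖ → ‖v‖ ≤ 2 * ρ → 0 ≤ ψ v → 0 < fderiv ℝ ψ v v)
    (H2 : ∀ u : X, u ≠ 0 → ∀ᶠ τ in nhdsWithin (0:ℝ) (Set.Ioi 0), ψ (τ • u) < 0) :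
    ∀ u : X, 0 < ‖u‖ → ‖u‖ ≤ 2 * ρ → 0 ≤ ψ u →
      ∃ τb ∈ Set.Ioc (0:ℝ) 1, ψ (τb • u) = 0 ∧
        (∀ τ ∈ Set.Ioc (0:ℝ) 1, ψ (τ • u) = 0 → τ = τb) ∧
        (∀ τ ∈ Set.Ioo (0:ℝ) τb, ψ (τ • u) < 0) ∧
        (∀ τ ∈ Set.Ioc τb (2 * ρ / ‖u‖), 0 < ψ (τ • u)) := by
  intro u hu hu2 hψu
  have hT : 1 ≤ 2 * ρ / ‖u‖ := (one_le_div hu).mpr hu2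
  have hderiv (τ : ℝ) : HasDerivAt (fun τ : ℝ => ψ (τ • u)) (fderiv ℝ ψ (τ • u) u) τ := by
    have := (hψ.differentiable one_ne_zero).differentiableAt.hasFDerivAt.comp_hasDerivAt τ
      ((hasDerivAt_id τ).smul_const u)
    rwa [one_smul] at this
  have hzero : ∀ τ ∈ Ioc 0 (2 * ρ / ‖u‖), ψ (τ • u) = 0 → 0 < fderiv ℝ ψ (τ • u) u := by
    intro τ hτ hψτ
    have hnorm : ‖τ • u‖ = τ * ‖u‖ := by rw [norm_smul, Real.norm_of_nonneg hτ.1.le]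
    have := H1 (τ • u) (by rw [hnorm]; exact mul_pos hτ.1 hu)
      (by rw [hnorm]; exact (le_div_iff₀ hu).mp hτ.2) hψτ.ge
    rw [map_smul, smul_eq_mul] at this
    exact pos_of_mul_pos_right this hτ.1.le
  obtain ⟨t, hψt, ht⟩ := ((H2 u (norm_pos_iff.mp hu)).and (Ioo_mem_nhdsGT one_pos)).exists
  obtain ⟨τb, hτb, hψτb⟩ : 0 ∈ (fun τ : ℝ => ψ (τ • u)) '' Icc t 1 :=
    intermediate_value_Icc ht.2.le (fun τ _ => (hderiv τ).continuousAt.continuousWithinAt)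
      ⟨hψt.le, by simpa using hψu⟩
  have hτb' : τb ∈ Ioc 0 1 := ⟨ht.1.trans_le hτb.1, hτb.2⟩
  obtain ⟨hneg, hpos⟩ := sign_of_deriv_pos_at_zeros (fun τ _ => hderiv τ) hzero
    ⟨hτb'.1, hτb'.2.trans hT⟩ hψτb
  refine ⟨τb, hτb', hψτb, fun τ hτ hψτ => ?_, hneg, hpos⟩
  rcases lt_trichotomy τ τb with h | h | h
  · exact absurd hψτ (hneg τ ⟨hτ.1, h⟩).ne
  · exact h
  · exact absurd hψτ (hpos τ ⟨h, hτ.2.trans hT⟩).ne'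

/-- (3.30)-(3.31) in the proof of Lemma 5: for `u` with `0 < ‖u‖ ≤ 2ρ` and `ψ(u) ≥ 0`
there is a unique `τ̄ ∈ (0,1]` with `ψ(τ̄u) = 0`; moreover `ψ(τu) < 0` on `(0,τ̄)` and
`ψ(τu) > 0` on `(τ̄, 2ρ/‖u‖]`. -/
theorem stmt_7 {X : Type*} [NormedAddCommGroup X] [NormedSpace ℝ X]
    (ρ : ℝ) (hρ : 0 < ρ) (ψ : X → ℝ) (hψ : ContDiff ℝ 1 ψ) (hψ0 : ψ 0 = 0)
    (H1 : ∀ v : X, 0 < ‖v‖ → ‖v‖ ≤ 2 * ρ → 0 ≤ ψ v → 0 < fderiv ℝ ψ v v)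
    (H2 : ∀ u : X, u ≠ 0 → ∀ᶠ τ in nhdsWithin (0:ℝ) (Set.Ioi 0), ψ (τ • u) < 0) :
    ∀ u : X, 0 < ‖u‖ → ‖u‖ ≤ 2 * ρ → 0 ≤ ψ u →
      ∃ τb ∈ Set.Ioc (0:ℝ) 1, ψ (τb • u) = 0 ∧
        (∀ τ ∈ Set.Ioc (0:ℝ) 1, ψ (τ • u) = 0 → τ = τb) ∧
        (∀ τ ∈ Set.Ioo (0:ℝ) τb, ψ (τ • u) < 0) ∧
        (∀ τ ∈ Set.Ioc τb (2 * ρ / ‖u‖), 0 < ψ (τ • u)) :=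
  stmt_7_general ρ ψ hψ H1 H2
end

section
/- The function τ : {u ∈ X : 0 < ‖u‖ ≤ ρ} → (0,1], defined by τ(u) := 1 if ψ(u) ≤ 0 and τ(u) := τ̄(u) (the unique zero in (0,1] of s ↦ ψ(s·u)) if ψ(u) ≥ 0, is well defined (the two prescriptions agree when ψ(u) = 0, since then τ̄(u) = 1) and continuous. -/
/-!
Along each ray, `s ↦ ψ (s • u)` has positive derivative wherever it is nonnegative (H1), so once
nonnegative it stays positive; hence it vanishes at most once on `(0, 1]`. Being negative for
small `s` (H2), it does vanish there, by the intermediate value theorem, once `ψ u ≥ 0`. So `τ u`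
is the point where it changes sign, or `1` if it stays negative. Continuity of `τ` follows because for each fixed `s` the sign of
`ψ (s • u)` is locally constant in `u` wherever it is nonzero.
-/

open Set Filter Topology

-- Barrier argument: `g` cannot become negative on `[a, b]`, since wherever it vanishes its
-- derivative is positive.
theorem strictMonoOn_Icc_of_deriv_pos_of_nonneg {g g' : ℝ → ℝ} {a b : ℝ}
    (hg : ∀ x ∈ Icc a b, HasDerivAt g (g' x) x) (hg' : ∀ x ∈ Icc a b, 0 ≤ g x → 0 < g' x)
    (ha : 0 ≤ g a) : StrictMonoOn g (Icc a b) := by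
  have hcont : ContinuousOn g (Icc a b) := fun x hx => (hg x hx).continuousAt.continuousWithinAt
  have hnonneg : ∀ x ∈ Icc a b, 0 ≤ g x := by
    have key := image_le_of_deriv_right_lt_deriv_boundary' (f := fun x => -g x)
      (f' := fun x => -g' x) (B := 0) (B' := 0) hcont.neg
      (fun x hx => (hg x (Ico_subset_Icc_self hx)).neg.hasDerivWithinAt) (by simpa using ha)
      continuousOn_const (fun x _ => hasDerivWithinAt_const x _ 0)
      (fun x hx hx0 => by simpa using hg' x (Ico_subset_Icc_self hx) (by simp_all))
    exact fun x hx => by simpa using key hx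
  refine strictMonoOn_of_deriv_pos (convex_Icc a b) hcont fun x hx => ?_
  rw [interior_Icc] at hx
  have hx' := Ioo_subset_Icc_self hx
  rw [(hg x hx').deriv]
  exact hg' x hx' (hnonneg x hx')

theorem continuousOn_of_sign_change {X : Type*} [TopologicalSpace X] {S : Set X} {τ : X → ℝ}
    {F : ℝ → X → ℝ} {a b : ℝ} (hF : ∀ s, Continuous (F s)) (hτ : ∀ u ∈ S, τ u ∈ Ioc a b)
    (hneg : ∀ u ∈ S, ∀ s, a < s → s < τ u → F s u < 0)
    (hpos : ∀ u ∈ S, ∀ s, τ u < s → s ≤ b → 0 < F s u) : ContinuousOn τ S := by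
  intro u₀ hu₀
  refine tendsto_order.2 ⟨fun c hc => ?_, fun c hc => ?_⟩
  · rcases lt_or_ge c a with hca | hac
    · filter_upwards [self_mem_nhdsWithin] with u hu using hca.trans (hτ u hu).1
    obtain ⟨s, hcs, hs⟩ := exists_between hc
    have hFs : ∀ᶠ u in 𝓝 u₀, F s u < 0 :=
      (hF s).continuousAt.eventually_lt continuousAt_const
        (hneg u₀ hu₀ s (hac.trans_lt hcs) hs)
    filter_upwards [self_mem_nhdsWithin, nhdsWithin_le_nhds hFs] with u hu hFu
    exact hcs.trans_le <| not_lt.1 fun h =>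
      (hpos u hu s h (hs.le.trans (hτ u₀ hu₀).2)).not_gt hFu
  · rcases lt_or_ge b c with hbc | hcb
    · filter_upwards [self_mem_nhdsWithin] with u hu using (hτ u hu).2.trans_lt hbc
    obtain ⟨s, hs, hsc⟩ := exists_between hc
    have hFs : ∀ᶠ u in 𝓝 u₀, 0 < F s u :=
      continuousAt_const.eventually_lt (hF s).continuousAt
        (hpos u₀ hu₀ s hs (hsc.le.trans hcb))
    filter_upwards [self_mem_nhdsWithin, nhdsWithin_le_nhds hFs] with u hu hFu
    refine (not_lt.1 fun h => ?_).trans_lt hsc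
    exact (hneg u hu s ((hτ u₀ hu₀).1.trans hs) h).not_gt hFu

section radial

variable {X : Type*} [NormedAddCommGroup X] [NormedSpace ℝ X] {ψ : X → ℝ} {u : X} {R : ℝ}

theorem hasDerivAt_apply_smul (hψ : Differentiable ℝ ψ) (u : X) (s : ℝ) :
    HasDerivAt (fun t : ℝ => ψ (t • u)) (fderiv ℝ ψ (s • u) u) s := by
  simpa [Function.comp_def] using
    (hψ (s • u)).hasFDerivAt.comp_hasDerivAt s ((hasDerivAt_id s).smul_const u)

theorem apply_smul_pos_of_nonneg (hψ : Differentiable ℝ ψ)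
    (H1 : ∀ v : X, 0 < ‖v‖ → ‖v‖ ≤ R → 0 ≤ ψ v → 0 < fderiv ℝ ψ v v)
    (hu : u ≠ 0) (huR : ‖u‖ ≤ R) {a b : ℝ} (ha : 0 < a) (hab : a < b) (hb : b ≤ 1)
    (h : 0 ≤ ψ (a • u)) : 0 < ψ (b • u) := by
  have hderiv : ∀ x ∈ Icc a b, 0 ≤ ψ (x • u) → 0 < fderiv ℝ ψ (x • u) u := by
    intro x hx hψx
    have hx0 : 0 < x := ha.trans_le hx.1
    have hnorm : ‖x • u‖ = x * ‖u‖ := by rw [norm_smul, Real.norm_of_nonneg hx0.le]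
    have hxu0 : 0 < ‖x • u‖ := by rw [hnorm]; exact mul_pos hx0 (norm_pos_iff.2 hu)
    have hxuR : ‖x • u‖ ≤ R := by
      rw [hnorm]; exact (mul_le_of_le_one_left (norm_nonneg u) (hx.2.trans hb)).trans huR
    have hpos := H1 (x • u) hxu0 hxuR hψx
    rw [map_smul, smul_eq_mul] at hpos
    exact pos_of_mul_pos_right hpos hx0.le
  have hmono := strictMonoOn_Icc_of_deriv_pos_of_nonneg
    (fun x _ => hasDerivAt_apply_smul hψ u x) hderiv h
  exact h.trans_lt (hmono (left_mem_Icc.2 hab.le) (right_mem_Icc.2 hab.le) hab)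

theorem exists_apply_smul_eq_zero (hψ : Continuous ψ)
    (H2 : ∀ u : X, u ≠ 0 → ∀ᶠ τ in 𝓝[>] (0:ℝ), ψ (τ • u) < 0)
    (hu : u ≠ 0) {s : ℝ} (hs : 0 < s) (h : 0 ≤ ψ (s • u)) :
    ∃ t ∈ Ioc 0 s, ψ (t • u) = 0 := by
  obtain ⟨t₀, hψt₀, ht₀⟩ := (Eventually.and (H2 u hu) (Ioo_mem_nhdsGT hs)).exists
  have hcont : ContinuousOn (fun t : ℝ => ψ (t • u)) (Icc t₀ s) := by fun_prop
  obtain ⟨t, ht, ht0⟩ := intermediate_value_Icc ht₀.2.le hcont ⟨hψt₀.le, h⟩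
  exact ⟨t, ⟨ht₀.1.trans_le ht.1, ht.2⟩, ht0⟩

open Classical in
noncomputable def radialZero (ψ : X → ℝ) (u : X) : ℝ :=
  if h : ∃ s ∈ Ioc (0 : ℝ) 1, ψ (s • u) = 0 then h.choose else 1

theorem radialZero_mem_Ioc (ψ : X → ℝ) (u : X) : radialZero ψ u ∈ Ioc (0 : ℝ) 1 := by
  unfold radialZero
  split_ifs with h
  exacts [h.choose_spec.1, ⟨one_pos, le_rfl⟩]

theorem apply_radialZero_smul (h : ∃ s ∈ Ioc (0 : ℝ) 1, ψ (s • u) = 0) :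
    ψ (radialZero ψ u • u) = 0 := by
  rw [radialZero, dif_pos h]
  exact h.choose_spec.2

theorem apply_smul_pos_of_radialZero_lt (hψ : Differentiable ℝ ψ)
    (H1 : ∀ v : X, 0 < ‖v‖ → ‖v‖ ≤ R → 0 ≤ ψ v → 0 < fderiv ℝ ψ v v)
    (hu : u ≠ 0) (huR : ‖u‖ ≤ R) {s : ℝ} (hs : radialZero ψ u < s) (hs1 : s ≤ 1) :
    0 < ψ (s • u) := by
  have hzero : ∃ t ∈ Ioc (0 : ℝ) 1, ψ (t • u) = 0 := by
    by_contra h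
    rw [radialZero, dif_neg h] at hs
    exact hs.not_ge hs1
  exact apply_smul_pos_of_nonneg hψ H1 hu huR (radialZero_mem_Ioc ψ u).1 hs hs1
    (apply_radialZero_smul hzero).ge

theorem apply_smul_neg_of_lt_radialZero (hψ : Differentiable ℝ ψ)
    (H1 : ∀ v : X, 0 < ‖v‖ → ‖v‖ ≤ R → 0 ≤ ψ v → 0 < fderiv ℝ ψ v v)
    (H2 : ∀ u : X, u ≠ 0 → ∀ᶠ τ in 𝓝[>] (0:ℝ), ψ (τ • u) < 0)
    (hu : u ≠ 0) (huR : ‖u‖ ≤ R) {s : ℝ} (hs0 : 0 < s) (hs : s < radialZero ψ u) :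
    ψ (s • u) < 0 := by
  by_contra! hψs
  obtain ⟨t, ht, ht0⟩ := exists_apply_smul_eq_zero hψ.continuous H2 hu hs0 hψs
  have ht1 : t ∈ Ioc (0 : ℝ) 1 := ⟨ht.1, ht.2.trans (hs.le.trans (radialZero_mem_Ioc ψ u).2)⟩
  have hpos := apply_smul_pos_of_nonneg hψ H1 hu huR ht1.1 (ht.2.trans_lt hs)
    (radialZero_mem_Ioc ψ u).2 ht0.ge
  exact hpos.ne' (apply_radialZero_smul ⟨t, ht1, ht0⟩)

end radial

theorem stmt_9_general {X : Type*} [NormedAddCommGroup X] [NormedSpace ℝ X]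
    (ρ : ℝ) (ψ : X → ℝ) (hψ : ContDiff ℝ 1 ψ)
    (H1 : ∀ v : X, 0 < ‖v‖ → ‖v‖ ≤ 2 * ρ → 0 ≤ ψ v → 0 < fderiv ℝ ψ v v)
    (H2 : ∀ u : X, u ≠ 0 → ∀ᶠ τ in nhdsWithin (0:ℝ) (Set.Ioi 0), ψ (τ • u) < 0) :
    ∃ tau : X → ℝ,
      ContinuousOn tau {u : X | 0 < ‖u‖ ∧ ‖u‖ ≤ ρ} ∧
      ∀ u : X, 0 < ‖u‖ → ‖u‖ ≤ ρ →
        tau u ∈ Set.Ioc (0:ℝ) 1 ∧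
        (ψ u ≤ 0 → tau u = 1) ∧
        (0 ≤ ψ u → ψ (tau u • u) = 0 ∧
          ∀ s ∈ Set.Ioc (0:ℝ) 1, ψ (s • u) = 0 → s = tau u) := by
  have hψd : Differentiable ℝ ψ := hψ.differentiable one_ne_zero
  have h2ρ : ∀ u : X, 0 < ‖u‖ → ‖u‖ ≤ ρ → ‖u‖ ≤ 2 * ρ := fun u h0 h => by linarith
  have hneg : ∀ u ∈ {u : X | 0 < ‖u‖ ∧ ‖u‖ ≤ ρ}, ∀ s, 0 < s → s < radialZero ψ u →
      ψ (s • u) < 0 := fun u ⟨h0, h⟩ _ hs0 hs =>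
    apply_smul_neg_of_lt_radialZero hψd H1 H2 (norm_pos_iff.1 h0) (h2ρ u h0 h) hs0 hs
  have hpos : ∀ u ∈ {u : X | 0 < ‖u‖ ∧ ‖u‖ ≤ ρ}, ∀ s, radialZero ψ u < s → s ≤ 1 →
      0 < ψ (s • u) := fun u ⟨h0, h⟩ _ hs hs1 =>
    apply_smul_pos_of_radialZero_lt hψd H1 (norm_pos_iff.1 h0) (h2ρ u h0 h) hs hs1
  refine ⟨radialZero ψ, continuousOn_of_sign_change (fun s => by fun_prop)
    (fun u _ => radialZero_mem_Ioc ψ u) hneg hpos, fun u h0 h => ⟨radialZero_mem_Ioc ψ u, ?_, ?_⟩⟩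
  · intro hψu
    refine le_antisymm (radialZero_mem_Ioc ψ u).2 (not_lt.1 fun hlt => ?_)
    have h1 := hpos u ⟨h0, h⟩ 1 hlt le_rfl
    rw [one_smul] at h1
    exact h1.not_ge hψu
  · intro hψu
    have hzero : ∃ s ∈ Ioc (0 : ℝ) 1, ψ (s • u) = 0 :=
      exists_apply_smul_eq_zero hψd.continuous H2 (norm_pos_iff.1 h0) one_pos (by rwa [one_smul])
    refine ⟨apply_radialZero_smul hzero, fun s hs hs0 => le_antisymm ?_ ?_⟩
    · exact not_lt.1 fun hlt => (hpos u ⟨h0, h⟩ s hlt hs.2).ne' hs0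
    · exact not_lt.1 fun hlt => (hneg u ⟨h0, h⟩ s hs.1 hlt).ne hs0

/-- Well-definedness and continuity of the radial rescaling function `τ(u)` from the
proof of Lemma 5: `τ(u) = 1` when `ψ(u) ≤ 0`, `τ(u)` is the unique zero in `(0,1]` of
`s ↦ ψ(su)` when `ψ(u) ≥ 0`, and `τ` is continuous on `{u : 0 < ‖u‖ ≤ ρ}`. -/
theorem stmt_9 {X : Type*} [NormedAddCommGroup X] [NormedSpace ℝ X]
    (ρ : ℝ) (hρ : 0 < ρ) (ψ : X → ℝ) (hψ : ContDiff ℝ 1 ψ) (hψ0 : ψ 0 = 0)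
    (H1 : ∀ v : X, 0 < ‖v‖ → ‖v‖ ≤ 2 * ρ → 0 ≤ ψ v → 0 < fderiv ℝ ψ v v)
    (H2 : ∀ u : X, u ≠ 0 → ∀ᶠ τ in nhdsWithin (0:ℝ) (Set.Ioi 0), ψ (τ • u) < 0) :
    ∃ tau : X → ℝ,
      ContinuousOn tau {u : X | 0 < ‖u‖ ∧ ‖u‖ ≤ ρ} ∧
      ∀ u : X, 0 < ‖u‖ → ‖u‖ ≤ ρ →
        tau u ∈ Set.Ioc (0:ℝ) 1 ∧
        (ψ u ≤ 0 → tau u = 1) ∧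
        (0 ≤ ψ u → ψ (tau u • u) = 0 ∧
          ∀ s ∈ Set.Ioc (0:ℝ) 1, ψ (s • u) = 0 → s = tau u) :=
  stmt_9_general ρ ψ hψ H1 H2
end

section
/- The set S := {u ∈ X : 0 < ‖u‖ ≤ ρ, ψ(u) ≤ 0} is a retract of {u ∈ X : 0 < ‖u‖ ≤ ρ}: there exists a continuous map g : {u ∈ X : 0 < ‖u‖ ≤ ρ} → S with g(u) = u whenever ψ(u) ≤ 0 (namely g(u) := τ(u)·u, where τ(u) = 1 if ψ(u) ≤ 0 and τ(u) is the unique zero in (0,1] of s ↦ ψ(s·u) otherwise). -/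
/-!
Along each ray `s ↦ ψ (s • u)` with `0 < ‖u‖ ≤ 2ρ`, hypothesis (H1) says the derivative is
positive wherever the value is nonnegative, so once the profile is nonnegative it is strictly
increasing up to `s = 1`. Hence, if `τ u` is the supremum of `{s ∈ [0, 1] | ψ (s • u) ≤ 0}`,
then `ψ (s • u) < 0` for `0 < s < τ u` and `ψ (s • u) > 0` for `τ u < s ≤ 1`. Both strict
inequalities persist for nearby `u`, which makes `τ` continuous, and (H2) keeps `τ u > 0`.
The retraction is `u ↦ τ u • u`.
-/

open Set Filter Topology

theorem strictMonoOn_Icc_of_deriv_pos_of_nonneg_s10 {f f' : ℝ → ℝ} {a b : ℝ}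
    (hf : ∀ x ∈ Icc a b, HasDerivAt f (f' x) x) (hf' : ∀ x ∈ Icc a b, 0 ≤ f x → 0 < f' x)
    (ha : 0 ≤ f a) : StrictMonoOn f (Icc a b) := by
  have hcont : ContinuousOn f (Icc a b) := fun x hx => (hf x hx).continuousAt.continuousWithinAt
  -- `f` cannot cross below the level `f a ≥ 0`, where its derivative is positive.
  have hge : ∀ x ∈ Icc a b, f a ≤ f x :=
    image_le_of_deriv_right_lt_deriv_boundary' continuousOn_const
      (fun _ _ => hasDerivWithinAt_const _ _ _) le_rfl hcont
      (fun x hx => (hf x (Ico_subset_Icc_self hx)).hasDerivWithinAt)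
      (fun x hx hfx => hf' x (Ico_subset_Icc_self hx) (hfx ▸ ha))
  exact strictMonoOn_of_hasDerivWithinAt_pos (convex_Icc a b) hcont
    (fun x hx => (hf x (interior_subset hx)).hasDerivWithinAt)
    (fun x hx => hf' x (interior_subset hx) (ha.trans (hge x (interior_subset hx))))

section RadialScale

variable {X : Type*} [NormedAddCommGroup X] [NormedSpace ℝ X] {ψ : X → ℝ} {u : X} {s : ℝ}

def radialSublevel (ψ : X → ℝ) (u : X) : Set ℝ := {s | s ∈ Icc 0 1 ∧ ψ (s • u) ≤ 0}

noncomputable def radialScale (ψ : X → ℝ) (u : X) : ℝ := sSup (radialSublevel ψ u)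

theorem bddAbove_radialSublevel : BddAbove (radialSublevel ψ u) := ⟨1, fun _ hs => hs.1.2⟩

theorem isClosed_radialSublevel (hψ : Continuous ψ) : IsClosed (radialSublevel ψ u) :=
  isClosed_Icc.inter (isClosed_le (hψ.comp (continuous_id.smul continuous_const)) continuous_const)

theorem le_radialScale (hs : s ∈ radialSublevel ψ u) : s ≤ radialScale ψ u :=
  le_csSup bddAbove_radialSublevel hs

theorem radialScale_nonneg : 0 ≤ radialScale ψ u :=
  Real.sSup_nonneg fun _ hs => hs.1.1

theorem radialScale_le_one : radialScale ψ u ≤ 1 :=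
  Real.sSup_le (fun _ hs => hs.1.2) zero_le_one

theorem radialScale_eq_one (hu : ψ u ≤ 0) : radialScale ψ u = 1 :=
  radialScale_le_one.antisymm (le_radialScale ⟨right_mem_Icc.2 zero_le_one, by rwa [one_smul]⟩)

theorem pos_of_radialScale_lt (hτs : radialScale ψ u < s) (hs : s ≤ 1) : 0 < ψ (s • u) :=
  lt_of_not_ge fun h => (le_radialScale ⟨⟨radialScale_nonneg.trans hτs.le, hs⟩, h⟩).not_gt hτs

theorem exists_pos_mem_radialSublevel (hu : ∀ᶠ t in 𝓝[>] (0 : ℝ), ψ (t • u) < 0) :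
    ∃ s, 0 < s ∧ s ∈ radialSublevel ψ u := by
  obtain ⟨s, hψs, hs⟩ := (hu.and (Ioo_mem_nhdsGT zero_lt_one)).exists
  exact ⟨s, hs.1, Ioo_subset_Icc_self hs, hψs.le⟩

theorem radialScale_pos (hu : ∀ᶠ t in 𝓝[>] (0 : ℝ), ψ (t • u) < 0) : 0 < radialScale ψ u := by
  obtain ⟨s, hs, hmem⟩ := exists_pos_mem_radialSublevel hu
  exact hs.trans_le (le_radialScale hmem)

theorem radialScale_mem (hψ : Continuous ψ) (hu : ∀ᶠ t in 𝓝[>] (0 : ℝ), ψ (t • u) < 0) :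
    radialScale ψ u ∈ radialSublevel ψ u := by
  obtain ⟨s, -, hmem⟩ := exists_pos_mem_radialSublevel hu
  exact (isClosed_radialSublevel hψ).csSup_mem ⟨s, hmem⟩ bddAbove_radialSublevel

theorem hasDerivAt_comp_smul (hψ : DifferentiableAt ℝ ψ (s • u)) :
    HasDerivAt (fun t : ℝ => ψ (t • u)) (fderiv ℝ ψ (s • u) u) s := by
  have hray : HasDerivAt (fun t : ℝ => t • u) u s := by
    simpa using (hasDerivAt_id s).smul_const u
  exact hψ.hasFDerivAt.comp_hasDerivAt s hray

variable {ρ : ℝ} (hψ : Differentiable ℝ ψ)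
  (H1 : ∀ v : X, 0 < ‖v‖ → ‖v‖ ≤ 2 * ρ → 0 ≤ ψ v → 0 < fderiv ℝ ψ v v)
include hψ H1

theorem strictMonoOn_comp_smul_of_nonneg (hu : 0 < ‖u‖) (huρ : ‖u‖ ≤ 2 * ρ) (hs : 0 < s)
    (hψs : 0 ≤ ψ (s • u)) : StrictMonoOn (fun t : ℝ => ψ (t • u)) (Icc s 1) := by
  refine strictMonoOn_Icc_of_deriv_pos_of_nonneg_s10 (fun t _ => hasDerivAt_comp_smul (hψ _))
    (fun t ht hψt => ?_) hψs
  have ht0 : 0 < t := hs.trans_le ht.1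
  have hnorm : ‖t • u‖ = t * ‖u‖ := by rw [norm_smul, Real.norm_of_nonneg ht0.le]
  have hH1 := H1 (t • u) (by rw [hnorm]; positivity) (by rw [hnorm]; nlinarith [ht.2]) hψt
  rw [map_smul, smul_eq_mul] at hH1
  exact pos_of_mul_pos_right hH1 ht0.le

theorem radialScale_le_of_nonneg (hu : 0 < ‖u‖) (huρ : ‖u‖ ≤ 2 * ρ)
    (hu' : ∀ᶠ t in 𝓝[>] (0 : ℝ), ψ (t • u) < 0) (hs : 0 < s) (hψs : 0 ≤ ψ (s • u)) :
    radialScale ψ u ≤ s := by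
  by_contra! hlt
  have hmem := radialScale_mem hψ.continuous hu'
  have := strictMonoOn_comp_smul_of_nonneg hψ H1 hu huρ hs hψs ⟨le_rfl, hlt.le.trans hmem.1.2⟩
    ⟨hlt.le, hmem.1.2⟩ hlt
  exact (hψs.trans_lt this).not_ge hmem.2

theorem continuousOn_radialScale
    (H2 : ∀ u : X, u ≠ 0 → ∀ᶠ τ in 𝓝[>] (0 : ℝ), ψ (τ • u) < 0) :
    ContinuousOn (radialScale ψ) {u : X | 0 < ‖u‖ ∧ ‖u‖ ≤ 2 * ρ} := by
  have hH2 {u : X} (hu : 0 < ‖u‖) := H2 u (norm_pos_iff.1 hu)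
  have hray (s : ℝ) : Continuous fun u : X => ψ (s • u) :=
    hψ.continuous.comp (continuous_const_smul s)
  rintro u₀ ⟨hu₀, hu₀ρ⟩
  refine tendsto_order.2 ⟨fun a ha => ?_, fun b hb => ?_⟩
  · obtain ⟨s, has, hsτ⟩ := exists_between (max_lt ha (radialScale_pos (hH2 hu₀)))
    have hs : 0 < s := (le_max_right _ _).trans_lt has
    have hψs : ψ (s • u₀) < 0 := lt_of_not_ge fun h =>
      (radialScale_le_of_nonneg hψ H1 hu₀ hu₀ρ (hH2 hu₀) hs h).not_gt hsτ
    filter_upwards [nhdsWithin_le_nhds ((hray s).continuousAt.eventually_lt continuousAt_const hψs)]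
      with u hu
    exact ((le_max_left _ _).trans_lt has).trans_le
      (le_radialScale ⟨⟨hs.le, hsτ.le.trans radialScale_le_one⟩, hu.le⟩)
  · rcases (radialScale_le_one (ψ := ψ) (u := u₀)).eq_or_lt with h1 | h1
    · exact Eventually.of_forall fun u => radialScale_le_one.trans_lt (h1 ▸ hb)
    obtain ⟨s, hτs, hsb⟩ := exists_between (lt_min hb h1)
    have hψs : 0 < ψ (s • u₀) := pos_of_radialScale_lt hτs (hsb.le.trans (min_le_right _ _))
    filter_upwards [nhdsWithin_le_nhds (continuousAt_const.eventually_lt (hray s).continuousAt hψs),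
      self_mem_nhdsWithin] with u hu ⟨hu0, huρ⟩
    exact (radialScale_le_of_nonneg hψ H1 hu0 huρ (hH2 hu0) (radialScale_nonneg.trans_lt hτs)
      hu.le).trans_lt (hsb.trans_le (min_le_left _ _))

end RadialScale

theorem stmt_10_general {X : Type*} [NormedAddCommGroup X] [NormedSpace ℝ X]
    (ρ : ℝ) (ψ : X → ℝ) (hψ : ContDiff ℝ 1 ψ)
    (H1 : ∀ v : X, 0 < ‖v‖ → ‖v‖ ≤ 2 * ρ → 0 ≤ ψ v → 0 < fderiv ℝ ψ v v)
    (H2 : ∀ u : X, u ≠ 0 → ∀ᶠ τ in nhdsWithin (0:ℝ) (Set.Ioi 0), ψ (τ • u) < 0) :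
    ∃ g : X → X,
      ContinuousOn g {u : X | 0 < ‖u‖ ∧ ‖u‖ ≤ ρ} ∧
      (∀ u : X, 0 < ‖u‖ → ‖u‖ ≤ ρ →
        0 < ‖g u‖ ∧ ‖g u‖ ≤ ρ ∧ ψ (g u) ≤ 0) ∧
      (∀ u : X, 0 < ‖u‖ → ‖u‖ ≤ ρ → ψ u ≤ 0 → g u = u) := by
  have hψ' : Differentiable ℝ ψ := hψ.differentiable one_ne_zero
  refine ⟨fun u => radialScale ψ u • u, ?_, fun u hu huρ => ?_, fun u _ _ hψu => ?_⟩
  · refine ((continuousOn_radialScale hψ' H1 H2).mono fun u hu => ?_).smul continuousOn_id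
    exact ⟨hu.1, by linarith [hu.1, hu.2]⟩
  · have hu' := H2 u (norm_pos_iff.1 hu)
    have hτ := radialScale_pos hu'
    have hnorm : ‖radialScale ψ u • u‖ = radialScale ψ u * ‖u‖ := by
      rw [norm_smul, Real.norm_of_nonneg hτ.le]
    refine ⟨by rw [hnorm]; positivity, ?_, (radialScale_mem hψ.continuous hu').2⟩
    rw [hnorm]
    exact (mul_le_of_le_one_left (norm_nonneg u) radialScale_le_one).trans huρ
  · simp only [radialScale_eq_one hψu, one_smul]

/-- `(B̄_ρ ∩ ψ⁰) \ {0}` is a retract of `B̄_ρ \ {0}`: there is a continuous map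
`g` of `{u : 0 < ‖u‖ ≤ ρ}` into `S = {u : 0 < ‖u‖ ≤ ρ, ψ(u) ≤ 0}` which restricts to
the identity on `S`. -/
theorem stmt_10 {X : Type*} [NormedAddCommGroup X] [NormedSpace ℝ X]
    (ρ : ℝ) (hρ : 0 < ρ) (ψ : X → ℝ) (hψ : ContDiff ℝ 1 ψ) (hψ0 : ψ 0 = 0)
    (H1 : ∀ v : X, 0 < ‖v‖ → ‖v‖ ≤ 2 * ρ → 0 ≤ ψ v → 0 < fderiv ℝ ψ v v)
    (H2 : ∀ u : X, u ≠ 0 → ∀ᶠ τ in nhdsWithin (0:ℝ) (Set.Ioi 0), ψ (τ • u) < 0) :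
    ∃ g : X → X,
      ContinuousOn g {u : X | 0 < ‖u‖ ∧ ‖u‖ ≤ ρ} ∧
      (∀ u : X, 0 < ‖u‖ → ‖u‖ ≤ ρ →
        0 < ‖g u‖ ∧ ‖g u‖ ≤ ρ ∧ ψ (g u) ≤ 0) ∧
      (∀ u : X, 0 < ‖u‖ → ‖u‖ ≤ ρ → ψ u ≤ 0 → g u = u) :=
  stmt_10_general ρ ψ hψ H1 H2
end
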